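/- arXiv:1410.5087 — 2 statements merged into one kernel-verified Lean document; each statement's English description precedes it below -/
import Mathlib

section
/- Let ⋊_ℓ S^k_n be the ℓ-layered generalized crown with n ≥ k+3 and ℓ ≥ 1. For critical pairs (x^i, x^{i+1}_α) between rows i and i+1 and (x^{i+1}_β, x^{i+2}) between rows i+1 and i+2, their duals form a strict alternating cycle if and only if α = β. -/
/-- In the generalized crown `S^k_n` (indices in `ZMod (n+k)`), `b_i` is incomparable
with `a_u` iff `u ≡ i + t (mod n+k)` for some `0 ≤ t ≤ k`. -/
def crownMiss (k : ℕ) {N : ℕ} (i u : ZMod N) : Prop :=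
  ∃ t : ℕ, t ≤ k ∧ u = i + (t : ZMod N)

/-- One step of the layered generalized crown `⋊_ℓ S^k_n` on `ℕ × ZMod (n+k)`:
`x^{i+1}_j` covers `x^i_m` exactly when `m` is a "hit" of `j`. -/
def layStep (k : ℕ) {N : ℕ} (x y : ℕ × ZMod N) : Prop :=
  y.1 = x.1 + 1 ∧ ¬ crownMiss k y.2 x.2

/-- The order of the layered generalized crown: reflexive transitive closure. -/
def layLe (k : ℕ) {N : ℕ} : ℕ × ZMod N → ℕ × ZMod N → Prop :=
  Relation.ReflTransGen (layStep k)

/-- The strict order of the layered generalized crown: transitive closure. -/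
def layLt (k : ℕ) {N : ℕ} : ℕ × ZMod N → ℕ × ZMod N → Prop :=
  Relation.TransGen (layStep k)


/-- `{(x₁,y₁),(x₂,y₂)}` is a strict alternating cycle of length 2 for the order `le`. -/
def sac2 {α : Type*} (le : α → α → Prop) (x1 y1 x2 y2 : α) : Prop :=
  (¬ le x1 y1 ∧ ¬ le y1 x1) ∧ (¬ le x2 y2 ∧ ¬ le y2 x2) ∧
    le y1 x2 ∧ le y2 x1 ∧ ¬ le y1 x1 ∧ ¬ le y2 x2

lemma layLe_fst {k N : ℕ} {x y : ℕ × ZMod N} (h : layLe k x y) : x.1 ≤ y.1 := by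
  induction h with
  | refl => exact le_rfl
  | tail _ hstep ih => have := hstep.1; omega

lemma layLe_eq {k N : ℕ} {x y : ℕ × ZMod N} (h : layLe k x y) (hfst : y.1 ≤ x.1) :
    x = y := by
  rcases (Relation.ReflTransGen.cases_head h) with rfl | ⟨c, hstep, rest⟩
  · rfl
  · have h1 := hstep.1
    have h2 := layLe_fst rest
    omega

lemma not_layLe_up {k N : ℕ} {i : ℕ} {a b : ZMod N} (hm : crownMiss k b a) :
    ¬ layLe k (i, a) (i + 1, b) := by
  intro hle
  rcases (Relation.ReflTransGen.cases_head hle) with heq | ⟨c, hstep, rest⟩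
  · exact absurd (congrArg Prod.fst heq) (by simp)
  · have h1 : c.1 = i + 1 := hstep.1
    have hc : c = (i + 1, b) := layLe_eq rest (by simp [h1])
    exact hstep.2 (by rw [hc] at *; exact hm)

lemma not_layLe_down {k N : ℕ} {i j : ℕ} (hij : j < i) (a b : ZMod N) :
    ¬ layLe k (i, a) (j, b) := fun hle => absurd (layLe_fst hle) (by simpa using hij.not_ge)

lemma exists_mid {k N : ℕ} (hN : 2 * k + 3 ≤ N) (u v : ZMod N) :
    ∃ z : ZMod N, ¬ crownMiss k z u ∧ ¬ crownMiss k v z := by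
  haveI : NeZero N := ⟨by omega⟩
  set S : Finset (ZMod N) :=
    (Finset.range (k+1)).image (fun t : ℕ => u - (t : ZMod N)) ∪
      (Finset.range (k+1)).image (fun t : ℕ => v + (t : ZMod N)) with hS
  have hcard : S.card < Fintype.card (ZMod N) := by
    have h1 : S.card ≤ (k+1) + (k+1) := by
      refine le_trans (Finset.card_union_le _ _) ?_
      exact Nat.add_le_add (le_trans (Finset.card_image_le) (le_of_eq (Finset.card_range _)))
        (le_trans (Finset.card_image_le) (le_of_eq (Finset.card_range _)))
    rw [ZMod.card]
    omega
  have : ∃ z : ZMod N, z ∉ S := by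
    by_contra hcon
    push_neg at hcon
    have : S = Finset.univ := Finset.eq_univ_iff_forall.mpr hcon
    rw [this, Finset.card_univ] at hcard
    exact lt_irrefl _ hcard
  obtain ⟨z, hz⟩ := this
  refine ⟨z, ?_, ?_⟩
  · rintro ⟨t, ht, rfl⟩
    exact hz (Finset.mem_union_left _ (Finset.mem_image.mpr
      ⟨t, Finset.mem_range.mpr (Nat.lt_succ_of_le ht), by ring⟩))
  · rintro ⟨t, ht, rfl⟩
    exact hz (Finset.mem_union_right _ (Finset.mem_image.mpr
      ⟨t, Finset.mem_range.mpr (Nat.lt_succ_of_le ht), rfl⟩))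

lemma layLe_two {k N : ℕ} (hN : 2 * k + 3 ≤ N) (i : ℕ) (u v : ZMod N) :
    layLe k (i, u) (i + 2, v) := by
  obtain ⟨z, hz1, hz2⟩ := exists_mid hN u v
  exact Relation.ReflTransGen.head (⟨rfl, hz1⟩ : layStep k (i, u) (i + 1, z))
    (Relation.ReflTransGen.single (⟨rfl, hz2⟩ : layStep k (i + 1, z) (i + 2, v)))


/-- In `⋊_ℓ S^k_n` with `n ≥ k+3`, for critical pairs `(x^i_u, x^{i+1}_α)` and
`(x^{i+1}_β, x^{i+2}_v)`, their duals form a strict alternating cycle iff `α = β`. -/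
theorem layered_adjacent_blocks (n k l i : ℕ) (h : k + 3 ≤ n) (hi1 : 1 ≤ i)
    (hi2 : i + 1 ≤ l) (u α β v : ZMod (n + k))
    (hcrit1 : crownMiss k α u) (hcrit2 : crownMiss k v β) :
    sac2 (layLe k) (i + 1, α) (i, u) (i + 2, v) (i + 1, β) ↔ α = β := by
  have hN : 2 * k + 3 ≤ n + k := by omega
  constructor
  · rintro ⟨-, -, -, hba, -, -⟩
    exact (Prod.mk.injEq _ _ _ _ ▸ (layLe_eq hba le_rfl)).2.symm
  · rintro rfl
    refine ⟨⟨not_layLe_down (by omega) _ _, not_layLe_up hcrit1⟩,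
      ⟨not_layLe_down (by omega) _ _, not_layLe_up hcrit2⟩,
      layLe_two hN i u v, Relation.ReflTransGen.refl,
      not_layLe_up hcrit1, not_layLe_up hcrit2⟩
end

section
/- Let 3 ≤ n < k+3 and set w = ⌈(k+1)/(n-2)⌉. In the ℓ-layered generalized crown ⋊_ℓ S^k_n with ℓ > w, for each j with 1 ≤ j ≤ ℓ - w + 1, the elements x^j_p ∈ X^j and x^{j+w}_q ∈ X^{j+w} are incomparable if and only if q is congruent modulo n+k to a value in {p + w(n-1) + 1, p + w(n-1) + 2, ..., p + w - 1}. -/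
/-!
Going up one level in the layered crown adds to the index a residue in `{1, …, n - 1}`
(the complement of the `k + 1` misses), so `x^a_p ≤ x^{a+m}_q` exactly when `q - p` is the
residue of some `S` with `m ≤ S ≤ m (n - 1)`: a sum of `m` such steps realises every value
in that range. As `w ≥ 1`, `x^{j+w}_q ≤ x^j_p` never holds, and as the window
`w, …, w + n + k - 1` represents every residue once, the incomparable `q` are those
represented by `w (n - 1) + 1, …, w + n + k - 1`.
-/

namespace ZMod

variable {N : ℕ}

theorem natCast_injOn_Ico (a : ℕ) : Set.InjOn (Nat.cast : ℕ → ZMod N) (Set.Ico a (a + N)) := by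
  intro S hS T hT hST
  simp only [Set.mem_Ico] at hS hT
  exact ((natCast_eq_natCast_iff _ _ _).mp hST).eq_of_abs_lt
    (abs_sub_lt_iff.mpr ⟨by omega, by omega⟩)

variable [NeZero N]

theorem exists_mem_Ico_natCast_eq (a : ℕ) (x : ZMod N) :
    ∃ S ∈ Set.Ico a (a + N), (S : ZMod N) = x :=
  ⟨a + (x - a).val, ⟨by omega, by have := (x - a).val_lt; omega⟩, by simp⟩

theorem not_exists_eq_add_natCast_Icc_iff (a b : ℕ) (p q : ZMod N) :
    (¬ ∃ S, a ≤ S ∧ S ≤ b ∧ q = p + S) ↔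
      ∃ s, s < a + N - 1 - b ∧ q = p + ((b + 1 + s : ℕ) : ZMod N) := by
  obtain ⟨S₀, hS₀, hpS₀⟩ := exists_mem_Ico_natCast_eq a (q - p)
  have hq : q = p + S₀ := by rw [hpS₀]; ring
  constructor
  · intro hnot
    have hbS₀ : b < S₀ := by
      by_contra! h
      exact hnot ⟨S₀, hS₀.1, h, hq⟩
    refine ⟨S₀ - (b + 1), by simp only [Set.mem_Ico] at hS₀; omega, ?_⟩
    rwa [Nat.add_sub_cancel' hbS₀]
  · rintro ⟨s, hs, hqs⟩ ⟨S, haS, hSb, hqS⟩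
    have : S = b + 1 + s := natCast_injOn_Ico a ⟨haS, by omega⟩ ⟨by omega, by omega⟩
      (add_left_cancel (hqS.symm.trans hqs))
    omega

end ZMod

theorem Nat.exists_eq_add_of_le_of_le_succ_mul {m d T : ℕ} (h₁ : m + 1 ≤ T)
    (h₂ : T ≤ (m + 1) * d) : ∃ S e, m ≤ S ∧ S ≤ m * d ∧ 1 ≤ e ∧ e ≤ d ∧ T = S + e := by
  rw [add_one_mul] at h₂
  have hd : 0 < d := Nat.pos_of_ne_zero (by rintro rfl; omega)
  have : m ≤ m * d := Nat.le_mul_of_pos_right m hd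
  exact ⟨T - min d (T - m), min d (T - m), by omega, by omega, by omega, by omega, by omega⟩

section LayeredCrown

variable {n k : ℕ}

theorem not_crownMiss_iff (hn : 0 < n) (x y : ZMod (n + k)) :
    ¬ crownMiss k y x ↔ ∃ e, 1 ≤ e ∧ e ≤ n - 1 ∧ y = x + e := by
  have : NeZero (n + k) := ⟨by omega⟩
  have hcompl : ∀ s e, s + e = n - 1 →
      ((k + 1 + s : ℕ) : ZMod (n + k)) + (e : ZMod (n + k)) = 0 := fun s e h => by
    rw [← Nat.cast_add, show k + 1 + s + e = n + k by omega, ZMod.natCast_self]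
  have hmiss : crownMiss k y x ↔ ∃ t, 0 ≤ t ∧ t ≤ k ∧ x = y + t := by
    simp only [crownMiss, zero_le, true_and]
  rw [hmiss, ZMod.not_exists_eq_add_natCast_Icc_iff]
  constructor
  · rintro ⟨s, hs, hx⟩
    exact ⟨n - 1 - s, by omega, by omega,
      by linear_combination -hx - hcompl s (n - 1 - s) (by omega)⟩
  · rintro ⟨e, he₁, he, hy⟩
    exact ⟨n - 1 - e, by omega, by linear_combination -hy - hcompl (n - 1 - e) e (by omega)⟩

theorem layLe_fst_le {N : ℕ} {x y : ℕ × ZMod N} (h : layLe k x y) : x.1 ≤ y.1 := by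
  induction h with
  | refl => rfl
  | tail _ hstep ih => exact ih.trans (hstep.1 ▸ Nat.le_succ _)

theorem layLe_add_succ_iff {N : ℕ} (a m : ℕ) (p q : ZMod N) :
    layLe k (a, p) (a + (m + 1), q) ↔
      ∃ r, layLe k (a, p) (a + m, r) ∧ layStep k (a + m, r) (a + (m + 1), q) := by
  rw [layLe, Relation.ReflTransGen.cases_tail_iff]
  constructor
  · rintro (h | ⟨⟨b, r⟩, hle, hstep⟩)
    · simp at h
    · obtain rfl : b = a + m := by have := hstep.1; simp only at this; omega
      exact ⟨r, hle, hstep⟩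
  · rintro ⟨r, hle, hstep⟩
    exact Or.inr ⟨_, hle, hstep⟩

theorem layLe_add_iff (hn : 0 < n) (a m : ℕ) (p q : ZMod (n + k)) :
    layLe k (a, p) (a + m, q) ↔ ∃ S, m ≤ S ∧ S ≤ m * (n - 1) ∧ q = p + S := by
  induction m generalizing q with
  | zero =>
    have hS : (∃ S, 0 ≤ S ∧ S ≤ 0 * (n - 1) ∧ q = p + S) ↔ q = p := by simp
    rw [hS, add_zero, layLe, Relation.ReflTransGen.cases_tail_iff]
    constructor
    · rintro (h | ⟨b, hle, hstep⟩)
      · exact (Prod.ext_iff.mp h).2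
      · have := layLe_fst_le hle
        have := hstep.1
        simp only at *
        omega
    · rintro rfl
      exact Or.inl rfl
  | succ m ih =>
    simp only [layLe_add_succ_iff, ih, layStep, not_crownMiss_iff hn, add_assoc, true_and]
    constructor
    · rintro ⟨r, ⟨S, hmS, hS, rfl⟩, e, he₁, he, rfl⟩
      exact ⟨S + e, by omega, by rw [add_one_mul]; omega, by push_cast; ring⟩
    · rintro ⟨T, hmT, hT, rfl⟩
      obtain ⟨S, e, hmS, hS, he₁, he, rfl⟩ := Nat.exists_eq_add_of_le_of_le_succ_mul hmT hT
      exact ⟨p + S, ⟨S, hmS, hS, rfl⟩, e, he₁, he, by push_cast; ring⟩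

end LayeredCrown

theorem layered_extreme_inc_general (n k w j : ℕ) (hn : 3 ≤ n)
    (hw : w = (k + n - 2) / (n - 2))
    (p q : ZMod (n + k)) :
    (¬ layLe k (j, p) (j + w, q) ∧ ¬ layLe k (j + w, q) (j, p)) ↔
      ∃ s : ℕ, s < n + k - w * (n - 2) - 1 ∧
        q = p + ((w * (n - 1) + 1 + s : ℕ) : ZMod (n + k)) := by
  have : NeZero (n + k) := ⟨by omega⟩
  have hw_pos : 0 < w := hw ▸ Nat.div_pos (by omega) (by omega)
  have hw_mul : w * (n - 1) = w * (n - 2) + w := by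
    rw [← mul_add_one]
    congr 1
    omega
  have not_down : ¬ layLe k (j + w, q) (j, p) := fun h => by
    have := layLe_fst_le h
    simp only at this
    omega
  rw [and_iff_left not_down, layLe_add_iff (by omega), ZMod.not_exists_eq_add_natCast_Icc_iff,
    hw_mul, show w + (n + k) - 1 - (w * (n - 2) + w) = n + k - w * (n - 2) - 1 by omega]

/-- In `⋊_ℓ S^k_n` with `3 ≤ n < k+3`, `w = ⌈(k+1)/(n-2)⌉` and `ℓ > w`:
`x^j_p` and `x^{j+w}_q` are incomparable iff `q` lies in the cyclic interval
`{p + w(n-1) + 1, …, p + w - 1}` modulo `n+k`. -/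
theorem layered_extreme_inc (n k l w j : ℕ) (hn : 3 ≤ n) (hk : n < k + 3)
    (hw : w = (k + n - 2) / (n - 2)) (hl : w < l) (hj1 : 1 ≤ j) (hj2 : j ≤ l - w + 1)
    (p q : ZMod (n + k)) :
    (¬ layLe k (j, p) (j + w, q) ∧ ¬ layLe k (j + w, q) (j, p)) ↔
      ∃ s : ℕ, s < n + k - w * (n - 2) - 1 ∧
        q = p + ((w * (n - 1) + 1 + s : ℕ) : ZMod (n + k)) :=
  layered_extreme_inc_general n k w j hn hw p q
end
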